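/- arXiv:2307.02627 — 5 statements merged into one kernel-verified Lean document; each statement's English description precedes it below -/
import Mathlib

section
/- The SUBSET proxy mechanism satisfies Preference Monotonicity: if j ∈ SUBSET(P, i) with j ≠ i, and voter k (k ≠ i) satisfies Agree(P_i, P_j) ⊆ Agree(P_i, P_k) and Disagree(P_i, P_k) ⊆ Disagree(P_i, P_j), then k ∈ SUBSET(P, i). -/
open scoped Classical

/-- A partial preference: an irreflexive, antisymmetric, transitive relation on `A`,
identified with its set of strict pairwise comparisons (edges). -/
structure PPref (A : Type*) where
  rel : A → A → Prop
  irrefl : ∀ a, ¬ rel a a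
  antisymm : ∀ a b, rel a b → ¬ rel b a
  trans : ∀ a b c, rel a b → rel b c → rel a c

namespace PPref

variable {A : Type*}

/-- `P ⊆ Q` as sets of edges. -/
def subsetOf (P Q : PPref A) : Prop := ∀ a b, P.rel a b → Q.rel a b

/-- The empty partial preference (no edges). -/
def isEmptyPref (P : PPref A) : Prop := ∀ a b, ¬ P.rel a b

/-- A linear (complete) preference. -/
def isLinear (P : PPref A) : Prop := ∀ a b, a ≠ b → P.rel a b ∨ P.rel b a

/-- Relabelling alternatives by a permutation `ψ`. -/
def map (ψ : Equiv.Perm A) (P : PPref A) : PPref A where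
  rel a b := P.rel (ψ.symm a) (ψ.symm b)
  irrefl a h := P.irrefl _ h
  antisymm a b h h' := P.antisymm _ _ h h'
  trans a b c h h' := P.trans _ _ _ h h'

end PPref

/-- Linear orders over `A`. -/
def LPref (A : Type*) := {P : PPref A // P.isLinear}

/-- Relabelling alternatives of a linear order. -/
def LPref.map {A : Type*} (ψ : Equiv.Perm A) (L : LPref A) : LPref A :=
  ⟨PPref.map ψ L.1, fun a b hab => L.2 _ _ fun h => hab (ψ.symm.injective h)⟩

section Defs

variable {N : Type*} {A : Type*}

/-- The defining axioms of a proxy mechanism. -/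
def IsProxyMech (g : (N → PPref A) → N → Set N) : Prop :=
  (∀ (P : N → PPref A) (i : N), (P i).isEmptyPref → g P i = {j | j ≠ i}) ∧
  (∀ (P : N → PPref A) (i : N), (P i).isLinear → g P i = {i}) ∧
  (∀ (P : N → PPref A) (i : N), ¬ (P i).isLinear → i ∉ g P i)

/-- Edges on which `P` and `Q` agree. -/
def Agree (P Q : PPref A) : Set (A × A) := {p | P.rel p.1 p.2 ∧ Q.rel p.1 p.2}

/-- Edges of `P` whose reversal lies in `Q`. -/
def Disagree (P Q : PPref A) : Set (A × A) := {p | P.rel p.1 p.2 ∧ Q.rel p.2 p.1}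

/-- Proxy Availability. -/
def PA (g : (N → PPref A) → N → Set N) : Prop :=
  ∀ (i : N) (Pi : PPref A), ∃ P : N → PPref A, P i = Pi ∧ g P i ≠ ∅

/-- Independence of Irrelevant Proxies. -/
def IIP (g : (N → PPref A) → N → Set N) : Prop :=
  ∀ (P P' : N → PPref A) (i j : N), P i = P' i → P j = P' j →
    (j ∈ g P i ↔ j ∈ g P' i)

/-- Preference Monotonicity. -/
def PM (g : (N → PPref A) → N → Set N) : Prop :=
  ∀ (P : N → PPref A) (i j k : N), j ∈ g P i → j ≠ i → k ≠ i →
    Agree (P i) (P j) ⊆ Agree (P i) (P k) →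
    Disagree (P i) (P k) ⊆ Disagree (P i) (P j) → k ∈ g P i

/-- The SUBSET proxy mechanism. -/
noncomputable def SUBSETg : (N → PPref A) → N → Set N := fun P i =>
  if (P i).isEmptyPref then {j | j ≠ i}
  else if (P i).isLinear then ({i} : Set N)
  else {j | j ≠ i ∧ (P i).subsetOf (P j)}

/-- The proxy actually chosen by voter `i`: herself if she votes directly (permitted set is
`{i}` or empty), otherwise the `S i`-maximal permitted proxy. -/
noncomputable def proxyOf (g : (N → PPref A) → N → Set N) (P : N → PPref A)
    (S : N → LPref N) (i : N) : N :=
  if g P i = {i} ∨ g P i = ∅ then i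
  else if h : ∃ j ∈ g P i, ∀ k ∈ g P i, k ≠ j → (S i).1.rel j k then h.choose else i

/-- The linear order cast on behalf of voter `i` by her guru: follow delegations
(`Fintype.card N` steps suffice); a terminal voter casts her own linear order if she has one,
otherwise her default; voters caught in cycles cast their defaults. -/
noncomputable def gurus [Fintype N] (g : (N → PPref A) → N → Set N)
    (P : N → PPref A) (S : N → LPref N) (D : N → LPref A) (i : N) : LPref A :=
  let d := proxyOf g P S
  let t := d^[Fintype.card N] i
  if d t = t then (if h : (P t).isLinear then ⟨P t, h⟩ else D t) else D i

/-- Zero Regret: the vote cast by each voter's guru extends her submitted partial order. -/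
def ZR [Fintype N] (g : (N → PPref A) → N → Set N) : Prop :=
  ∀ (P : N → PPref A) (S : N → LPref N) (D : N → LPref A),
    (∀ i, (P i).subsetOf (D i).1) → ∀ i, (P i).subsetOf (gurus g P S D i).1

end Defs

/-! Whether a voter `j ≠ i` belongs to `SUBSET(P, i)` depends on `j` only through `P i ⊆ P j`,
and `P i ⊆ P j` means that `Agree (P i) (P j)` is all of `P i`; hence it passes from `j` to `k`. -/

theorem PPref.subsetOf_of_agree_subset {A : Type*} {P Q R : PPref A} (hPQ : P.subsetOf Q)
    (h : Agree P Q ⊆ Agree P R) : P.subsetOf R :=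
  fun a b hab => (h (show (a, b) ∈ Agree P Q from ⟨hab, hPQ a b hab⟩)).2

theorem mem_SUBSETg_iff_of_ne {N A : Type*} {P : N → PPref A} {i j : N} (hji : j ≠ i) :
    j ∈ SUBSETg P i ↔ ((P i).isEmptyPref ∨ ¬ (P i).isLinear) ∧ (P i).subsetOf (P j) := by
  unfold SUBSETg
  split_ifs with hempty hlin
  · exact iff_of_true hji ⟨Or.inl hempty, fun a b hab => (hempty a b hab).elim⟩
  · simp only [Set.mem_singleton_iff, hji, hempty, hlin, not_true, or_self, false_and]
  · exact ⟨fun h => ⟨Or.inr hlin, h.2⟩, fun h => ⟨hji, h.2⟩⟩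

/-- The SUBSET proxy mechanism satisfies Preference Monotonicity. -/
theorem subset_satisfies_PM {N A : Type*} :
    ∀ (P : N → PPref A) (i j k : N),
      j ∈ SUBSETg P i → j ≠ i → k ≠ i →
      Agree (P i) (P j) ⊆ Agree (P i) (P k) →
      Disagree (P i) (P k) ⊆ Disagree (P i) (P j) →
      k ∈ SUBSETg P i := by
  intro P i j k hj hji hki hagree _
  obtain ⟨hmode, hij⟩ := (mem_SUBSETg_iff_of_ne hji).1 hj
  exact (mem_SUBSETg_iff_of_ne hki).2 ⟨hmode, PPref.subsetOf_of_agree_subset hij hagree⟩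
end

section
/- If a proxy mechanism g satisfies Proxy Availability, Independence of Irrelevant Proxies, and Preference Monotonicity, then for any profile P of partial orders, any voter i with P_i not a linear order, and any voter j with P_i ⊆ P_j, we have j ∈ g(P, i). -/
open scoped Classical

/-
PA supplies, for the order `P i`, some profile in which `i` has a permitted proxy `k ≠ i`.
By PM a voter reporting the same order as a permitted proxy is permitted too, and a voter whose
order extends `P i` agrees with `P i` on every edge and disagrees on none, so it is permitted as
well. IIP lets us change the reports of all other voters freely, which transports the permission
from `k` to a third voter `m ∉ {i, j}`, then to `j` reporting `P j`, and finally to `P` itself.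
-/

open Function

namespace PPref

variable {A : Type*}

theorem agree_subset_of_subsetOf {P Q : PPref A} (R : PPref A) (h : P.subsetOf Q) :
    Agree P R ⊆ Agree P Q :=
  fun _ hp => ⟨hp.1, h _ _ hp.1⟩

theorem disagree_subset_of_subsetOf {P Q : PPref A} (R : PPref A) (h : P.subsetOf Q) :
    Disagree P Q ⊆ Disagree P R :=
  fun _ hp => absurd hp.2 (Q.antisymm _ _ (h _ _ hp.1))

end PPref

section Axioms

variable {N A : Type*} {g : (N → PPref A) → N → Set N}

theorem IIP.mem_update_iff (hIIP : IIP g) (P : N → PPref A) (Q : PPref A) {i j k : N}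
    (hki : k ≠ i) (hkj : k ≠ j) : j ∈ g (update P k Q) i ↔ j ∈ g P i :=
  hIIP _ _ i j (update_of_ne hki.symm _ _) (update_of_ne hkj.symm _ _)

theorem PM.mem_of_eq (hPM : PM g) {P : N → PPref A} {i j k : N} (hj : j ∈ g P i)
    (hji : j ≠ i) (hki : k ≠ i) (hkj : P k = P j) : k ∈ g P i :=
  hPM P i j k hj hji hki (by rw [hkj]) (by rw [hkj])

theorem PM.mem_of_subsetOf (hPM : PM g) {P : N → PPref A} {i j k : N} (hj : j ∈ g P i)
    (hji : j ≠ i) (hki : k ≠ i) (hk : (P i).subsetOf (P k)) : k ∈ g P i :=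
  hPM P i j k hj hji hki (PPref.agree_subset_of_subsetOf _ hk)
    (PPref.disagree_subset_of_subsetOf _ hk)

theorem exists_profile_mem_of_not_isLinear (hg : IsProxyMech g) (hPA : PA g) (hIIP : IIP g)
    (hPM : PM g) {i m : N} (hmi : m ≠ i) {Pi : PPref A} (hPi : ¬ Pi.isLinear) :
    ∃ Q : N → PPref A, Q i = Pi ∧ m ∈ g Q i := by
  obtain ⟨Q, hQi, hQ⟩ := hPA i Pi
  obtain ⟨k, hk⟩ := Set.nonempty_iff_ne_empty.mpr hQ
  have hki : k ≠ i := by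
    rintro rfl
    exact hg.2.2 Q k (hQi ▸ hPi) hk
  by_cases hkm : k = m
  · exact ⟨Q, hQi, hkm ▸ hk⟩
  · refine ⟨update Q m (Q k), by rw [update_of_ne hmi.symm, hQi], ?_⟩
    have hk' : k ∈ g (update Q m (Q k)) i := (hIIP.mem_update_iff Q _ hmi (Ne.symm hkm)).mpr hk
    exact hPM.mem_of_eq hk' hki hmi (by rw [update_self, update_of_ne hkm])

end Axioms

/-- If a proxy mechanism satisfies PA, IIP and PM, then every voter `j ≠ i` whose partial
order extends `P i` (with `P i` not linear) is a permitted proxy for `i`. -/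
theorem pa_iip_pm_subset_lemma {N A : Type*} [Fintype N]
    (hN : 3 ≤ Fintype.card N)
    (g : (N → PPref A) → N → Set N) (hg : IsProxyMech g)
    (hPA : PA g) (hIIP : IIP g) (hPM : PM g) :
    ∀ (P : N → PPref A) (i j : N), j ≠ i → ¬ (P i).isLinear →
      (P i).subsetOf (P j) → j ∈ g P i := by
  intro P i j hji hnl hsub
  obtain ⟨m, hmi, hmj⟩ : ∃ m : N, m ≠ i ∧ m ≠ j :=
    ENat.exists_ne_ne_of_three_le (by simpa using hN) i j
  obtain ⟨Q, hQi, hmQ⟩ := exists_profile_mem_of_not_isLinear hg hPA hIIP hPM hmi hnl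
  have hRi : update Q j (P j) i = P i := by rw [update_of_ne hji.symm, hQi]
  have hRj : update Q j (P j) j = P j := update_self _ _ _
  have hmR : m ∈ g (update Q j (P j)) i := (hIIP.mem_update_iff Q _ hji hmj.symm).mpr hmQ
  have hjR : j ∈ g (update Q j (P j)) i := hPM.mem_of_subsetOf hmR hmi hji (by rwa [hRi, hRj])
  exact (hIIP _ P i j hRi hRj).mp hjR
end

section
/- The UNIV proxy mechanism satisfies Proxy Availability, Independence of Irrelevant Proxies, and Preference Monotonicity, but fails Zero Regret (when |A| ≥ 3 and n ≥ 2). -/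
/-!
UNIV's permitted set depends only on whether the voter's own order is linear, which gives IIP and
PM at once, and PA as soon as there is a second voter. Zero Regret fails: with a third alternative
the one-edge order `b ≻ a` is not linear, so its voter must delegate to some other voter; if all
other voters vote directly with a linear order ranking `a ≻ b`, her guru casts a vote reversing
her only comparison.
-/

open scoped Classical

/-- The UNIV proxy mechanism. -/
noncomputable def UNIVg {N A : Type*} : (N → PPref A) → N → Set N := fun P i =>
  if (P i).isLinear then ({i} : Set N) else {j | j ≠ i}

namespace PPref

variable {A : Type*}

theorem isStrictTotalOrder_of_isLinear {P : PPref A} (hP : P.isLinear) :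
    IsStrictTotalOrder A P.rel where
  irrefl := P.irrefl
  trans := P.trans
  trichotomous a b hab hba := by_contra fun hne => (hP a b hne).elim hab hba

theorem exists_max_of_isLinear {P : PPref A} (hP : P.isLinear) {s : Set A} (hs : s.Finite)
    (hne : s.Nonempty) : ∃ j ∈ s, ∀ k ∈ s, k ≠ j → P.rel j k := by
  have := isStrictTotalOrder_of_isLinear hP
  -- `P.rel` becomes `<`, so the top-ranked element of `s` is its least element.
  let := linearOrderOfSTO P.rel
  obtain ⟨j, hj, hmin⟩ := s.exists_min_image id hs hne
  exact ⟨j, hj, fun k hk hkj => (hmin k hk).lt_of_ne' hkj⟩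

def single {a b : A} (hab : a ≠ b) : PPref A where
  rel x y := x = a ∧ y = b
  irrefl _ h := hab (h.1.symm.trans h.2)
  antisymm _ _ h h' := hab (h.1.symm.trans h'.2)
  trans _ _ _ h h' := (hab (h'.1.symm.trans h.2)).elim

theorem not_isLinear_single {a b c : A} (hab : a ≠ b) (hca : c ≠ a) (hcb : c ≠ b) :
    ¬ (single hab).isLinear := fun h =>
  (h a c hca.symm).elim (fun hac => hcb hac.2) (fun hca' => hca hca'.1)

end PPref

namespace LPref

variable {A : Type*}

def ofIsStrictTotalOrder (r : A → A → Prop) [IsStrictTotalOrder A r] : LPref A :=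
  ⟨⟨r, irrefl_of r, fun _ _ => asymm_of r, fun _ _ _ => trans_of r⟩,
    fun a b hab => (trichotomous_of r a b).imp_right (Or.resolve_left · hab)⟩

instance : Nonempty (LPref A) := ⟨ofIsStrictTotalOrder WellOrderingRel⟩

theorem exists_rel {a b : A} (hab : a ≠ b) : ∃ L : LPref A, L.1.rel a b := by
  obtain ⟨L⟩ := (inferInstance : Nonempty (LPref A))
  rcases L.2 a b hab with h | h
  · exact ⟨L, h⟩
  · refine ⟨L.map (Equiv.swap a b), ?_⟩
    show L.1.rel ((Equiv.swap a b).symm a) ((Equiv.swap a b).symm b)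
    simpa using h

end LPref

section Delegation

variable {N A : Type*} {g : (N → PPref A) → N → Set N} {P : N → PPref A} {S : N → LPref N}
  {i : N}

theorem proxyOf_eq_self_of_eq_singleton (h : g P i = {i}) : proxyOf g P S i = i :=
  if_pos (Or.inl h)

theorem proxyOf_mem [Finite N] (hi : g P i ≠ {i}) (hne : (g P i).Nonempty) :
    proxyOf g P S i ∈ g P i := by
  have hmax := (S i).1.exists_max_of_isLinear (S i).2 (Set.toFinite _) hne
  rw [proxyOf, if_neg (not_or.2 ⟨hi, hne.ne_empty⟩), dif_pos hmax]
  exact hmax.choose_spec.1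

theorem gurus_eq_of_proxyOf_eq [Fintype N] {D : N → LPref A} {j : N}
    (hij : proxyOf g P S i = j) (hj : proxyOf g P S j = j) (hL : (P j).isLinear) :
    (gurus g P S D i).1 = P j := by
  have ht : (proxyOf g P S)^[Fintype.card N] i = j := by
    obtain ⟨m, hm⟩ := Nat.exists_eq_add_one.2 (Fintype.card_pos_iff.2 ⟨i⟩)
    rw [hm, Function.iterate_succ_apply, hij, Function.iterate_fixed hj]
  dsimp only [gurus]
  generalize (proxyOf g P S)^[Fintype.card N] i = t at ht ⊢
  subst ht
  rw [if_pos hj]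
  exact congrArg Subtype.val (dif_pos hL)

end Delegation

section UNIV

variable {N A : Type*} {P : N → PPref A} {i : N}

theorem UNIVg_of_isLinear (h : (P i).isLinear) : UNIVg P i = {i} := if_pos h

theorem UNIVg_of_not_isLinear (h : ¬ (P i).isLinear) : UNIVg P i = {j | j ≠ i} := if_neg h

theorem UNIVg_nonempty [Nontrivial N] : (UNIVg P i).Nonempty := by
  by_cases h : (P i).isLinear
  · exact ⟨i, (UNIVg_of_isLinear h).symm ▸ rfl⟩
  · rw [UNIVg_of_not_isLinear h]
    exact exists_ne i

theorem proxyOf_UNIVg_ne [Finite N] [Nontrivial N] {S : N → LPref N}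
    (h : ¬ (P i).isLinear) : proxyOf UNIVg P S i ≠ i := by
  have hi : UNIVg P i ≠ {i} := by
    rw [UNIVg_of_not_isLinear h]
    exact fun h' => (h'.ge rfl : i ≠ i) rfl
  simpa [UNIVg_of_not_isLinear h] using proxyOf_mem (S := S) hi UNIVg_nonempty

theorem pa_UNIVg [Nontrivial N] : PA (UNIVg (N := N) (A := A)) :=
  fun _ Pi => ⟨fun _ => Pi, rfl, UNIVg_nonempty.ne_empty⟩

theorem iip_UNIVg : IIP (UNIVg (N := N) (A := A)) := fun P P' i j hi _ => by
  simp only [UNIVg, hi]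

theorem pm_UNIVg : PM (UNIVg (N := N) (A := A)) := fun P i j k hj hji hki _ _ => by
  by_cases h : (P i).isLinear
  · rw [UNIVg_of_isLinear h] at hj
    exact absurd hj hji
  · rw [UNIVg_of_not_isLinear h]
    exact hki

theorem not_zr_UNIVg [Fintype N] [Nontrivial N] {a b c : A} (hab : a ≠ b) (hca : c ≠ a)
    (hcb : c ≠ b) : ¬ ZR (UNIVg (N := N) (A := A)) := by
  intro hZR
  obtain ⟨L, hL⟩ := LPref.exists_rel hab
  obtain ⟨L', hL'⟩ := LPref.exists_rel hab.symm
  let S : N → LPref N := fun _ => Classical.arbitrary _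
  let i : N := Classical.arbitrary N
  let P := Function.update (fun _ => L.1) i (PPref.single hab.symm)
  let D := Function.update (fun _ => L) i L'
  have hPD : ∀ k, (P k).subsetOf (D k).1 := by
    intro k
    by_cases hk : k = i
    · subst hk
      simp only [P, D, Function.update_self]
      rintro x y ⟨rfl, rfl⟩
      exact hL'
    · simp only [P, D, Function.update_of_ne hk]
      exact fun _ _ => id
  set j := proxyOf UNIVg P S i
  have hj : j ≠ i :=
    proxyOf_UNIVg_ne (by simpa [P] using PPref.not_isLinear_single hab.symm hcb hca)
  have hPj : P j = L.1 := Function.update_of_ne hj _ _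
  have hLj : (P j).isLinear := hPj ▸ L.2
  have hba := hZR P S D hPD i b a (by simp [P, PPref.single])
  rw [gurus_eq_of_proxyOf_eq rfl (proxyOf_eq_self_of_eq_singleton (UNIVg_of_isLinear hLj)) hLj,
    hPj] at hba
  exact L.1.antisymm a b hL hba

end UNIV

/-- UNIV satisfies PA, IIP and PM, but fails ZR (when `|A| ≥ 3` and `n ≥ 2`). -/
theorem univ_properties {N A : Type*} [Fintype N] [Fintype A]
    (hA : 3 ≤ Fintype.card A) (hN : 2 ≤ Fintype.card N) :
    PA (UNIVg (N := N) (A := A)) ∧ IIP (UNIVg (N := N) (A := A)) ∧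
    PM (UNIVg (N := N) (A := A)) ∧ ¬ ZR (UNIVg (N := N) (A := A)) := by
  have : Nontrivial N := Fintype.one_lt_card_iff_nontrivial.1 hN
  obtain ⟨a, b, c, hab, hac, hbc⟩ := Fintype.two_lt_card_iff.1 hA
  exact ⟨pa_UNIVg, iip_UNIVg, pm_UNIVg, not_zr_UNIVg hab hac.symm hbc.symm⟩
end

section
/- If f is anonymous and g is proxy-mechanism anonymous, then the pair (f, g) satisfies Proxy Vote Anonymity. -/
open scoped Classical

section SCF

variable {N : Type*} {A : Type*}

/-- Anonymity of a social choice function. -/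
def Anonymous [Fintype N] (f : (N → LPref A) → A) : Prop :=
  ∀ (ψ : Equiv.Perm N) (L : N → LPref A), f (fun i => L (ψ i)) = f L

/-- Neutrality of a social choice function. -/
def Neutral (f : (N → LPref A) → A) : Prop :=
  ∀ (ψ : Equiv.Perm A) (L : N → LPref A), ψ (f L) = f (fun i => LPref.map ψ (L i))

/-- Proxy Vote Anonymity of a pair `(f, g)`: relabelling voters (in preferences, proxy
rankings — including the names occurring inside them — and defaults) leaves the outcome
unchanged. -/
def PVAnon [Fintype N] (f : (N → LPref A) → A) (g : (N → PPref A) → N → Set N) : Prop :=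
  ∀ (P : N → PPref A) (S : N → LPref N) (D : N → LPref A),
    (∀ i, (P i).subsetOf (D i).1) →
    ∀ ψ : Equiv.Perm N,
      f (gurus g P S D) =
        f (gurus g (fun i => P (ψ.symm i)) (fun i => LPref.map ψ (S (ψ.symm i)))
            (fun i => D (ψ.symm i)))

/-- Proxy Vote Neutrality of a pair `(f, g)`: relabelling alternatives renames the outcome. -/
def PVNeut [Fintype N] (f : (N → LPref A) → A) (g : (N → PPref A) → N → Set N) : Prop :=
  ∀ (P : N → PPref A) (S : N → LPref N) (D : N → LPref A),
    (∀ i, (P i).subsetOf (D i).1) →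
    ∀ ψ : Equiv.Perm A,
      ψ (f (gurus g P S D)) =
        f (gurus g (fun i => PPref.map ψ (P i)) S (fun i => LPref.map ψ (D i)))

/-- Proxy Vote Addition Monotonicity. -/
def PVAM [Fintype N] [DecidableEq N] (f : (N → LPref A) → A)
    (g : (N → PPref A) → N → Set N) : Prop :=
  ∀ (P : N → PPref A) (S : N → LPref N) (D : N → LPref A),
    (∀ j, (P j).subsetOf (D j).1) →
    ∀ (i : N) (a b : A) (Pi' : PPref A),
      f (gurus g P S D) = a →
      (∀ x y, Pi'.rel x y ↔ (P i).rel x y ∨ (x = a ∧ y = b)) →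
      Pi'.subsetOf (D i).1 →
      f (gurus g (Function.update P i Pi') S D) = a

/-- Proxy Vote Deletion Monotonicity. -/
def PVDM [Fintype N] [DecidableEq N] (f : (N → LPref A) → A)
    (g : (N → PPref A) → N → Set N) : Prop :=
  ∀ (P : N → PPref A) (S : N → LPref N) (D : N → LPref A),
    (∀ j, (P j).subsetOf (D j).1) →
    ∀ (i : N) (a b : A) (Pi' : PPref A),
      f (gurus g P S D) = a →
      (∀ x y, Pi'.rel x y ↔ (P i).rel x y ∧ ¬ (x = b ∧ y = a)) →
      f (gurus g (Function.update P i Pi') S D) = a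

/-- Weak monotonicity of a social choice function: moving the winner `a` up one place
(replacing `b ≻ a` by `a ≻ b` in one voter's ballot) preserves the winner. -/
def WeakMono [DecidableEq N] (f : (N → LPref A) → A) : Prop :=
  ∀ (L : N → LPref A) (i : N) (a b : A) (Li' : LPref A),
    f L = a →
    (∀ x y, Li'.1.rel x y ↔ (((L i).1.rel x y ∧ ¬ (x = b ∧ y = a)) ∨ (x = a ∧ y = b))) →
    f (Function.update L i Li') = a

end SCF

/-- Proxy-mechanism anonymity: relabelling voters by `ψ` (so that new voter `ψ i` holds old
voter `i`'s preference) relabels each permitted-proxy set accordingly. -/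
def MechAnon {N A : Type*} (g : (N → PPref A) → N → Set N) : Prop :=
  ∀ (P : N → PPref A) (i : N) (ψ : Equiv.Perm N),
    g (fun j => P (ψ.symm j)) (ψ i) = (fun x => ψ x) '' g P i


/-! Relabelling the voters commutes with every step of delegation: by proxy-mechanism anonymity
voter `ψ i` of the relabelled profile has permitted proxies `ψ '' g P i`, ranked by the relabelled
order, so her chosen proxy is `ψ` of voter `i`'s. Hence delegation chains, their terminal voters
and the cast ballots are relabelled as well: the new guru profile is the old one composed with
`ψ⁻¹`, and anonymity of `f` gives the same outcome. -/

namespace LPref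

variable {N : Type*}

def IsGreatest (L : LPref N) (G : Set N) (j : N) : Prop :=
  j ∈ G ∧ ∀ k ∈ G, k ≠ j → L.1.rel j k

theorem IsGreatest.unique {L : LPref N} {G : Set N} {j j' : N} (hj : L.IsGreatest G j)
    (hj' : L.IsGreatest G j') : j = j' := by
  by_contra hne
  exact L.1.antisymm j j' (hj.2 j' hj'.1 (Ne.symm hne)) (hj'.2 j hj.1 hne)

theorem isGreatest_map_image_iff (ψ : Equiv.Perm N) {L : LPref N} {G : Set N} {j : N} :
    (L.map ψ).IsGreatest (ψ '' G) (ψ j) ↔ L.IsGreatest G j := by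
  simp only [IsGreatest, LPref.map, PPref.map, Set.forall_mem_image, ψ.injective.mem_set_image,
    ne_eq, EmbeddingLike.apply_eq_iff_eq, Equiv.symm_apply_apply]

theorem exists_isGreatest_map_image_iff (ψ : Equiv.Perm N) {L : LPref N} {G : Set N} :
    (∃ j, (L.map ψ).IsGreatest (ψ '' G) j) ↔ ∃ j, L.IsGreatest G j := by
  rw [← ψ.exists_congr_right]
  simp only [isGreatest_map_image_iff]

end LPref

section Relabel

variable {N A : Type*} {g : (N → PPref A) → N → Set N}

theorem proxyOf_relabel (hga : MechAnon g) (P : N → PPref A) (S : N → LPref N)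
    (ψ : Equiv.Perm N) (i : N) :
    proxyOf g (fun j => P (ψ.symm j)) (fun j => (S (ψ.symm j)).map ψ) (ψ i) =
      ψ (proxyOf g P S i) := by
  have hG : g (fun j => P (ψ.symm j)) (ψ i) = ψ '' g P i := hga P i ψ
  have hdirect :
      (ψ '' g P i = {ψ i} ∨ ψ '' g P i = ∅) ↔ (g P i = {i} ∨ g P i = ∅) := by
    rw [← Set.image_singleton, ψ.injective.image_injective.eq_iff, Set.image_eq_empty]
  unfold proxyOf
  simp only [hG, Equiv.symm_apply_apply]
  by_cases hc : g P i = {i} ∨ g P i = ∅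
  · rw [if_pos (hdirect.mpr hc), if_pos hc]
  rw [if_neg (mt hdirect.mp hc), if_neg hc]
  split_ifs with hex' hex hex
  · exact LPref.IsGreatest.unique hex'.choose_spec
      ((LPref.isGreatest_map_image_iff ψ).mpr hex.choose_spec)
  · exact absurd ((LPref.exists_isGreatest_map_image_iff ψ).mp hex') hex
  · exact absurd ((LPref.exists_isGreatest_map_image_iff ψ).mpr hex) hex'
  · rfl

theorem gurus_relabel [Fintype N] (hga : MechAnon g) (P : N → PPref A) (S : N → LPref N)
    (D : N → LPref A) (ψ : Equiv.Perm N) (i : N) :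
    gurus g (fun j => P (ψ.symm j)) (fun j => (S (ψ.symm j)).map ψ) (fun j => D (ψ.symm j))
      (ψ i) = gurus g P S D i := by
  have hsemi : Function.Semiconj ψ (proxyOf g P S)
      (proxyOf g (fun j => P (ψ.symm j)) (fun j => (S (ψ.symm j)).map ψ)) :=
    fun x => (proxyOf_relabel hga P S ψ x).symm
  simp only [gurus]
  rw [← hsemi.iterate_right (Fintype.card N) i, ← hsemi]
  generalize (proxyOf g P S)^[Fintype.card N] i = t
  by_cases hlin : (P t).isLinear <;>
    simp only [EmbeddingLike.apply_eq_iff_eq, Equiv.symm_apply_apply, hlin, ↓reduceDIte]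

end Relabel

theorem anon_mechanon_implies_pvanon_general {N A : Type*} [Fintype N]
    (f : (N → LPref A) → A) (g : (N → PPref A) → N → Set N)
    (hf : Anonymous f) (hga : MechAnon g) : PVAnon f g := by
  intro P S D _ ψ
  conv_rhs => rw [← hf ψ]
  simp only [gurus_relabel hga]

/-- If `f` is anonymous and `g` is proxy-mechanism anonymous, then `(f, g)` satisfies
Proxy Vote Anonymity. -/
theorem anon_mechanon_implies_pvanon {N A : Type*} [Fintype N]
    (f : (N → LPref A) → A) (g : (N → PPref A) → N → Set N)
    (hg : IsProxyMech g) (hf : Anonymous f) (hga : MechAnon g) : PVAnon f g :=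
  anon_mechanon_implies_pvanon_general f g hf hga
end

section
/- If f is neutral and g is proxy-mechanism neutral, then the pair (f, g) satisfies Proxy Vote Neutrality. -/
/-! Since `g` ignores relabellings of alternatives, so do the proxy choices and hence the whole
delegation graph: every voter reaches the same guru, whose cast vote is merely relabelled by `ψ`.
Neutrality of `f` then transports the relabelling to the outcome. -/

open scoped Classical

/-- Proxy-mechanism neutrality: relabelling the alternatives does not affect any voter's
set of permitted proxies. -/
def MechNeut {N A : Type*} (g : (N → PPref A) → N → Set N) : Prop :=
  ∀ (P : N → PPref A) (i : N) (ψ : Equiv.Perm A),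
    g (fun j => PPref.map ψ (P j)) i = g P i

theorem PPref.isLinear_map_iff {A : Type*} (ψ : Equiv.Perm A) (P : PPref A) :
    (P.map ψ).isLinear ↔ P.isLinear := by
  refine ⟨fun h a b hab => ?_, fun h a b hab => h _ _ (ψ.symm.injective.ne hab)⟩
  simpa [PPref.map] using h (ψ a) (ψ b) (ψ.injective.ne hab)

theorem LPref.map_dite_isLinear {A : Type*} (ψ : Equiv.Perm A) (P : PPref A) (L : LPref A) :
    (if h : (P.map ψ).isLinear then (⟨P.map ψ, h⟩ : LPref A) else L.map ψ) =
      LPref.map ψ (if h : P.isLinear then (⟨P, h⟩ : LPref A) else L) := by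
  by_cases h : P.isLinear
  · simp only [h, (P.isLinear_map_iff ψ).mpr h, ↓reduceDIte]
    rfl
  · simp only [h, mt (P.isLinear_map_iff ψ).mp h, ↓reduceDIte]
    rfl

section MechNeut

variable {N A : Type*} {g : (N → PPref A) → N → Set N}

theorem MechNeut.proxyOf_map (hg : MechNeut g) (P : N → PPref A) (S : N → LPref N)
    (ψ : Equiv.Perm A) : proxyOf g (fun j => (P j).map ψ) S = proxyOf g P S := by
  funext i
  simp only [proxyOf, hg P i ψ]

theorem MechNeut.gurus_map [Fintype N] (hg : MechNeut g) (P : N → PPref A) (S : N → LPref N)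
    (D : N → LPref A) (ψ : Equiv.Perm A) :
    gurus g (fun i => (P i).map ψ) S (fun i => (D i).map ψ) =
      fun i => (gurus g P S D i).map ψ := by
  funext i
  dsimp only [gurus]
  rw [hg.proxyOf_map]
  split
  · exact LPref.map_dite_isLinear ψ _ _
  · rfl

end MechNeut

theorem neut_mechneut_implies_pvneut_general {N A : Type*} [Fintype N]
    (f : (N → LPref A) → A) (g : (N → PPref A) → N → Set N)
    (hf : Neutral f) (hgn : MechNeut g) : PVNeut f g := by
  intro P S D _ ψ
  rw [hgn.gurus_map, hf]

/-- If `f` is neutral and `g` is proxy-mechanism neutral, then `(f, g)` satisfies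
Proxy Vote Neutrality. -/
theorem neut_mechneut_implies_pvneut {N A : Type*} [Fintype N]
    (f : (N → LPref A) → A) (g : (N → PPref A) → N → Set N)
    (hg : IsProxyMech g) (hf : Neutral f) (hgn : MechNeut g) : PVNeut f g :=
  neut_mechneut_implies_pvneut_general f g hf hgn
end
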